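/- Let 𝒞 = (S, Δ, r) be a semimatroid with linear order on S and s = max S, where s is not a loop nor a coloop and {s} ∈ Δ. Then del_s(BC(𝒞)) = BC(𝒞 − s) and lk_s(BC(𝒞)) = BC(𝒞/s). -/

import Mathlib

/-- A semimatroid on ground type `α`: a nonempty downward-closed collection `Δ` of finite
subsets (a simplicial complex) together with a rank function `r` satisfying the five
semimatroid axioms of Ardila. -/
structure IsSemimatroid {α : Type*} [DecidableEq α] (Δ : Finset α → Prop) (r : Finset α → ℕ) :
    Prop where
  nonempty : ∃ σ, Δ σ
  down_closed : ∀ ⦃σ τ : Finset α⦄, Δ σ → τ ⊆ σ → Δ τ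
  rank_le_card : ∀ ⦃σ⦄, Δ σ → r σ ≤ σ.card
  rank_mono : ∀ ⦃σ τ⦄, Δ σ → Δ τ → σ ⊆ τ → r σ ≤ r τ
  submodular : ∀ ⦃σ τ⦄, Δ σ → Δ τ → Δ (σ ∪ τ) → r (σ ∪ τ) + r (σ ∩ τ) ≤ r σ + r τ
  union_mem : ∀ ⦃σ τ⦄, Δ σ → Δ τ → r σ = r (σ ∩ τ) → Δ (σ ∪ τ)
  exchange : ∀ ⦃σ τ⦄, Δ σ → Δ τ → r σ < r τ → ∃ y ∈ τ \ σ, Δ (insert y σ)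

/-- A circuit of a semimatroid: a dependent face all of whose proper subsets are
independent. -/
def IsCircuit {α : Type*} (Δ : Finset (Finset α)) (r : Finset α → ℕ) (C : Finset α) : Prop :=
  C ∈ Δ ∧ r C < C.card ∧ ∀ X : Finset α, X ⊂ C → r X = X.card

/-- `σ` contains a broken circuit, i.e. a set `C \ {min C}` for some circuit `C`. -/
def HasBrokenCircuit {α : Type*} [LinearOrder α] (Δ : Finset (Finset α)) (r : Finset α → ℕ)
    (σ : Finset α) : Prop :=
  ∃ C : Finset α, IsCircuit Δ r C ∧ ∃ h : C.Nonempty, C.erase (C.min' h) ⊆ σ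

/-- Membership in the broken circuit complex `BC(𝒞)`: a face containing no broken circuit. -/
def InBC {α : Type*} [LinearOrder α] (Δ : Finset (Finset α)) (r : Finset α → ℕ)
    (σ : Finset α) : Prop :=
  σ ∈ Δ ∧ ¬ HasBrokenCircuit Δ r σ

/-- The deletion complex at `e`. -/
def delC {α : Type*} [DecidableEq α] (Δ : Finset (Finset α)) (e : α) : Finset (Finset α) :=
  Δ.filter (fun τ => e ∉ τ)

/-- The link (contraction complex) at `e`. -/
def lkC {α : Type*} [DecidableEq α] (Δ : Finset (Finset α)) (e : α) : Finset (Finset α) :=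
  (Δ.filter (fun τ => e ∈ τ)).image (fun τ => τ.erase e)

/-- `B` is a basis: an independent face maximal among independent faces. -/
def IsSMBasis {α : Type*} (Δ : Finset (Finset α)) (r : Finset α → ℕ) (B : Finset α) : Prop :=
  B ∈ Δ ∧ r B = B.card ∧ ∀ X ∈ Δ, r X = X.card → B ⊆ X → X = B

/-!
The maximal element `s` is never the minimum of a circuit: a circuit whose minimum is `s` is
`{s}`, which is independent because `s` is not a loop. So a circuit containing `s` keeps `s` in
its broken circuit, and a face avoiding `s` contains a broken circuit of `𝒞` only if it contains
one of `𝒞 − s`.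

For the link, take `σ` with `s ∉ σ` and `σ ∪ {s} ∈ Δ`. A circuit `C'` of `𝒞/s` with
`C' \ min C' ⊆ σ` makes `C' ∪ {s}` dependent in `𝒞`, and every circuit inside it has its broken
circuit inside `σ ∪ {s}`. Conversely a circuit `C` of `𝒞` with `C \ min C ⊆ σ ∪ {s}` gives the
dependent face `C \ {s}` of `𝒞/s` if `s ∈ C`, and `C` itself if `s ∉ C` (then `C ∪ {s}` is a
face by the union axiom, applied to `C` and `(C \ min C) ∪ {s}`). A circuit of `𝒞/s` inside that
face has its broken circuit inside `σ`, because passing to a subset of `C` can only raise the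
minimum.
-/

open Finset

namespace Finset

variable {α : Type*} [LinearOrder α]

theorem min'_eq_of_subset_of_min'_mem {s t : Finset α} (hst : s ⊆ t) (hs : s.Nonempty)
    (ht : t.Nonempty) (hmem : t.min' ht ∈ s) : s.min' hs = t.min' ht :=
  le_antisymm (min'_le s _ hmem) (min'_subset hs hst)

theorem erase_min'_subset_of_subset {C D τ : Finset α} (hDC : D ⊆ C) (hC : C.Nonempty)
    (hD : D.Nonempty) (h : D.erase (C.min' hC) ⊆ τ) : D.erase (D.min' hD) ⊆ τ := by
  intro x hx
  obtain ⟨hxm, hxD⟩ := mem_erase.mp hx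
  refine h (mem_erase.mpr ⟨?_, hxD⟩)
  rintro rfl
  exact hxm (min'_eq_of_subset_of_min'_mem hDC hD hC hxD).symm

theorem erase_min'_subset_insert_erase_min' {C D : Finset α} {s : α} (hCD : C ⊆ insert s D)
    (hC : C.Nonempty) (hD : D.Nonempty) (hs : C.min' hC ≠ s) :
    C.erase (C.min' hC) ⊆ insert s (D.erase (D.min' hD)) := by
  intro x hx
  obtain ⟨hxm, hxC⟩ := mem_erase.mp hx
  rcases mem_insert.mp (hCD hxC) with rfl | hxD
  · exact mem_insert_self _ _
  refine mem_insert_of_mem (mem_erase.mpr ⟨?_, hxD⟩)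
  rintro rfl
  have hmD : C.min' hC ∈ D := (mem_insert.mp (hCD (min'_mem C hC))).resolve_left hs
  exact hxm (le_antisymm (min'_le D _ hmD) (min'_le C _ hxC))

end Finset

section Circuits

variable {α : Type*} {Δ : Finset (Finset α)} {r : Finset α → ℕ} {C : Finset α}

theorem IsCircuit.nonempty (hC : IsCircuit Δ r C) : C.Nonempty := by
  rw [nonempty_iff_ne_empty]
  rintro rfl
  exact absurd hC.2.1 (Nat.not_lt_zero _)

theorem exists_isCircuit_subset_of_rank_lt (hdown : ∀ ⦃σ τ⦄, σ ∈ Δ → τ ⊆ σ → τ ∈ Δ)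
    (hrank : ∀ ⦃σ⦄, σ ∈ Δ → r σ ≤ σ.card) {D : Finset α} (hD : D ∈ Δ)
    (hdep : r D < D.card) : ∃ C ⊆ D, IsCircuit Δ r C := by
  induction D using Finset.strongInduction with
  | H D ih =>
    by_cases hmin : ∀ X, X ⊂ D → r X = X.card
    · exact ⟨D, subset_rfl, hD, hdep, hmin⟩
    obtain ⟨X, hXD, hX⟩ := not_forall₂.mp hmin
    have hXΔ := hdown hD hXD.subset
    obtain ⟨C, hCX, hC⟩ := ih X hXD hXΔ (lt_of_le_of_ne (hrank hXΔ) hX)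
    exact ⟨C, hCX.trans hXD.subset, hC⟩

theorem IsCircuit.min'_ne [LinearOrder α] {s : α} (hC : IsCircuit Δ r C)
    (hmax : ∀ a, a ≤ s) (hs : r {s} ≠ 0) : C.min' hC.nonempty ≠ s := by
  intro hmin
  have hCs : C = {s} := eq_singleton_iff_unique_mem.mpr
    ⟨hmin ▸ min'_mem C _, fun x hx => le_antisymm (hmax x) (hmin ▸ min'_le C x hx)⟩
  have hdep := hC.2.1
  rw [hCs, card_singleton] at hdep
  omega

end Circuits

namespace IsSemimatroid

variable {α : Type*} [DecidableEq α] {Δ : Finset (Finset α)} {r : Finset α → ℕ}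

theorem empty_mem (h : IsSemimatroid (· ∈ Δ) r) : ∅ ∈ Δ :=
  let ⟨_, hσ⟩ := h.nonempty
  h.down_closed hσ (empty_subset _)

theorem rank_empty (h : IsSemimatroid (· ∈ Δ) r) : r ∅ = 0 :=
  Nat.le_zero.mp (h.rank_le_card h.empty_mem)

theorem rank_add_one_of_isCircuit (h : IsSemimatroid (· ∈ Δ) r) {C : Finset α}
    (hC : IsCircuit Δ r C) : r C + 1 = C.card := by
  obtain ⟨x, hx⟩ := hC.nonempty
  have hindep : r (C.erase x) = (C.erase x).card := hC.2.2 _ (erase_ssubset hx)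
  have hmono : r (C.erase x) ≤ r C :=
    h.rank_mono (h.down_closed hC.1 (erase_subset _ _)) hC.1 (erase_subset _ _)
  have hcard : (C.erase x).card + 1 = C.card := card_erase_add_one hx
  have hdep := hC.2.1
  omega

theorem rank_insert_le {s : α} (h : IsSemimatroid (· ∈ Δ) r) (hsΔ : {s} ∈ Δ) {X : Finset α}
    (hX : X ∈ Δ) (hsX : s ∉ X) (hins : insert s X ∈ Δ) : r (insert s X) ≤ r X + r {s} := by
  have hsub := h.submodular hsΔ hX (by rwa [← insert_eq])
  rwa [← insert_eq, singleton_inter_of_notMem hsX, h.rank_empty, add_zero, add_comm] at hsub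

/-- The union axiom applied to `C` and `(C \ {x}) ∪ {s}`, which meet in the basis `C \ {x}`
of `C`. -/
theorem insert_mem_of_isCircuit {s x : α} (h : IsSemimatroid (· ∈ Δ) r) {C : Finset α}
    (hC : IsCircuit Δ r C) (hx : x ∈ C) (hsC : s ∉ C) (hins : insert s (C.erase x) ∈ Δ) :
    insert s C ∈ Δ := by
  have hinter : C ∩ insert s (C.erase x) = C.erase x := by
    rw [inter_insert_of_notMem hsC, inter_eq_right.mpr (erase_subset _ _)]
  have hrank : r C = r (C ∩ insert s (C.erase x)) := by
    have hindep : r (C.erase x) = (C.erase x).card := hC.2.2 _ (erase_ssubset hx)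
    have hcard : (C.erase x).card + 1 = C.card := card_erase_add_one hx
    have hcirc := h.rank_add_one_of_isCircuit hC
    rw [hinter]
    omega
  have hunion := h.union_mem hC.1 hins hrank
  rwa [union_insert, union_eq_left.mpr (erase_subset _ _)] at hunion

end IsSemimatroid

section Deletion

variable {α : Type*} [LinearOrder α] {Δ : Finset (Finset α)} {r : Finset α → ℕ} {s : α}

theorem isCircuit_delC_iff {C : Finset α} :
    IsCircuit (delC Δ s) r C ↔ IsCircuit Δ r C ∧ s ∉ C := by
  simp only [IsCircuit, delC, mem_filter]
  tauto

theorem hasBrokenCircuit_delC_iff (hmax : ∀ a, a ≤ s) (hs : r {s} ≠ 0) {σ : Finset α}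
    (hsσ : s ∉ σ) : HasBrokenCircuit (delC Δ s) r σ ↔ HasBrokenCircuit Δ r σ := by
  constructor
  · rintro ⟨C, hC, hne, hCσ⟩
    exact ⟨C, (isCircuit_delC_iff.mp hC).1, hne, hCσ⟩
  · rintro ⟨C, hC, hne, hCσ⟩
    have hsC : s ∉ C := fun hsC =>
      hsσ (hCσ (mem_erase.mpr ⟨(hC.min'_ne hmax hs).symm, hsC⟩))
    exact ⟨C, isCircuit_delC_iff.mpr ⟨hC, hsC⟩, hne, hCσ⟩

theorem inBC_delC_iff (hmax : ∀ a, a ≤ s) (hs : r {s} ≠ 0) (σ : Finset α) :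
    (InBC Δ r σ ∧ s ∉ σ) ↔ InBC (delC Δ s) r σ := by
  simp only [InBC, delC, mem_filter]
  constructor
  · rintro ⟨⟨hσ, hbc⟩, hsσ⟩
    exact ⟨⟨hσ, hsσ⟩, (hasBrokenCircuit_delC_iff hmax hs hsσ).not.mpr hbc⟩
  · rintro ⟨⟨hσ, hsσ⟩, hbc⟩
    exact ⟨⟨hσ, (hasBrokenCircuit_delC_iff hmax hs hsσ).not.mp hbc⟩, hsσ⟩

end Deletion

section Link

variable {α : Type*} [DecidableEq α] {Δ : Finset (Finset α)} {r : Finset α → ℕ} {s : α}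

/-- The rank function of the contraction `𝒞/s`. -/
def contrRank (r : Finset α → ℕ) (s : α) (τ : Finset α) : ℕ :=
  r (insert s τ) - r {s}

theorem mem_lkC {σ : Finset α} : σ ∈ lkC Δ s ↔ s ∉ σ ∧ insert s σ ∈ Δ := by
  simp only [lkC, mem_image, mem_filter]
  constructor
  · rintro ⟨τ, ⟨hτ, hsτ⟩, rfl⟩
    exact ⟨notMem_erase _ _, by rwa [insert_erase hsτ]⟩
  · rintro ⟨hsσ, hσ⟩
    exact ⟨insert s σ, ⟨hσ, mem_insert_self _ _⟩, erase_insert hsσ⟩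

namespace IsSemimatroid

theorem lkC_down_closed (h : IsSemimatroid (· ∈ Δ) r) :
    ∀ ⦃σ τ : Finset α⦄, σ ∈ lkC Δ s → τ ⊆ σ → τ ∈ lkC Δ s := by
  intro σ τ hσ hτσ
  rw [mem_lkC] at hσ ⊢
  exact ⟨fun hsτ => hσ.1 (hτσ hsτ), h.down_closed hσ.2 (insert_subset_insert s hτσ)⟩

theorem contrRank_le_card (h : IsSemimatroid (· ∈ Δ) r) (hs : r {s} ≠ 0) :
    ∀ ⦃σ⦄, σ ∈ lkC Δ s → contrRank r s σ ≤ σ.card := by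
  intro σ hσ
  rw [mem_lkC] at hσ
  have hrank := h.rank_le_card hσ.2
  rw [card_insert_of_notMem hσ.1] at hrank
  unfold contrRank
  omega

theorem rank_insert_lt_of_isCircuit_lkC (h : IsSemimatroid (· ∈ Δ) r) (hsΔ : {s} ∈ Δ)
    {C : Finset α} (hC : IsCircuit (lkC Δ s) (contrRank r s) C) :
    r (insert s C) < (insert s C).card := by
  have hsC := (mem_lkC.mp hC.1).1
  have hdep : contrRank r s C < C.card := hC.2.1
  have hrs : r {s} ≤ 1 := h.rank_le_card hsΔ
  rw [card_insert_of_notMem hsC]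
  unfold contrRank at hdep
  omega

theorem contrRank_erase_lt_of_isCircuit (h : IsSemimatroid (· ∈ Δ) r) (hs : r {s} ≠ 0)
    {C : Finset α} (hC : IsCircuit Δ r C) (hsC : s ∈ C) :
    contrRank r s (C.erase s) < (C.erase s).card := by
  have hcirc := h.rank_add_one_of_isCircuit hC
  have hcard : (C.erase s).card + 1 = C.card := card_erase_add_one hsC
  have hsingle : C ≠ {s} := by
    rintro rfl
    have hdep := hC.2.1
    rw [card_singleton] at hdep
    omega
  have hpos : 0 < (C.erase s).card :=
    card_pos.mpr ((erase_nonempty hsC).mpr (nontrivial_iff_ne_singleton hsC |>.mpr hsingle))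
  unfold contrRank
  rw [insert_erase hsC]
  omega

theorem contrRank_lt_of_isCircuit (h : IsSemimatroid (· ∈ Δ) r) (hsΔ : {s} ∈ Δ)
    {C : Finset α} (hC : IsCircuit Δ r C) (hsC : s ∉ C) (hins : insert s C ∈ Δ) :
    contrRank r s C < C.card := by
  have hle := h.rank_insert_le hsΔ hC.1 hsC hins
  have hdep := hC.2.1
  unfold contrRank
  omega

end IsSemimatroid

end Link

namespace IsSemimatroid

variable {α : Type*} [LinearOrder α] {Δ : Finset (Finset α)} {r : Finset α → ℕ} {s : α}

theorem hasBrokenCircuit_insert_of_lkC (h : IsSemimatroid (· ∈ Δ) r)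
    (hsΔ : {s} ∈ Δ) (hmax : ∀ a, a ≤ s) (hs : r {s} ≠ 0) {σ : Finset α}
    (hbc : HasBrokenCircuit (lkC Δ s) (contrRank r s) σ) :
    HasBrokenCircuit Δ r (insert s σ) := by
  obtain ⟨C', hC', hne', hC'σ⟩ := hbc
  obtain ⟨C, hCC', hC⟩ := exists_isCircuit_subset_of_rank_lt h.down_closed h.rank_le_card
    (mem_lkC.mp hC'.1).2 (h.rank_insert_lt_of_isCircuit_lkC hsΔ hC')
  exact ⟨C, hC, hC.nonempty, (erase_min'_subset_insert_erase_min' hCC' hC.nonempty hne'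
    (hC.min'_ne hmax hs)).trans (insert_subset_insert s hC'σ)⟩

theorem hasBrokenCircuit_lkC_of_subset (h : IsSemimatroid (· ∈ Δ) r)
    (hs : r {s} ≠ 0) {σ C D : Finset α} (hD : D ∈ lkC Δ s) (hdep : contrRank r s D < D.card)
    (hDC : D ⊆ C) (hC : C.Nonempty) (hDσ : D.erase (C.min' hC) ⊆ σ) :
    HasBrokenCircuit (lkC Δ s) (contrRank r s) σ := by
  obtain ⟨C', hC'D, hC'⟩ :=
    exists_isCircuit_subset_of_rank_lt h.lkC_down_closed (h.contrRank_le_card hs) hD hdep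
  exact ⟨C', hC', hC'.nonempty, erase_min'_subset_of_subset (hC'D.trans hDC) hC hC'.nonempty
    ((erase_subset_erase _ hC'D).trans hDσ)⟩

theorem hasBrokenCircuit_lkC_of_insert (h : IsSemimatroid (· ∈ Δ) r)
    (hsΔ : {s} ∈ Δ) (hs : r {s} ≠ 0) {σ : Finset α} (hsσ : s ∉ σ) (hσ : insert s σ ∈ Δ)
    (hbc : HasBrokenCircuit Δ r (insert s σ)) :
    HasBrokenCircuit (lkC Δ s) (contrRank r s) σ := by
  obtain ⟨C, hC, hne, hCσ⟩ := hbc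
  by_cases hsC : s ∈ C
  · refine h.hasBrokenCircuit_lkC_of_subset hs (D := C.erase s) ?_
      (h.contrRank_erase_lt_of_isCircuit hs hC hsC) (erase_subset _ _) hne ?_
    · exact mem_lkC.mpr ⟨notMem_erase _ _, by rw [insert_erase hsC]; exact hC.1⟩
    · rw [erase_right_comm]
      exact (erase_subset_erase s hCσ).trans (by rw [erase_insert hsσ])
  · have hBσ : C.erase (C.min' hne) ⊆ σ := fun x hx =>
      (mem_insert.mp (hCσ hx)).resolve_left fun hxs => hsC (hxs ▸ mem_of_mem_erase hx)
    have hins : insert s C ∈ Δ := h.insert_mem_of_isCircuit hC (min'_mem C hne) hsC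
      (h.down_closed hσ (insert_subset_insert s hBσ))
    exact h.hasBrokenCircuit_lkC_of_subset hs (mem_lkC.mpr ⟨hsC, hins⟩)
      (h.contrRank_lt_of_isCircuit hsΔ hC hsC hins) subset_rfl hne hBσ

theorem inBC_lkC_iff (h : IsSemimatroid (· ∈ Δ) r) (hsΔ : {s} ∈ Δ)
    (hmax : ∀ a, a ≤ s) (hs : r {s} ≠ 0) (σ : Finset α) :
    (s ∉ σ ∧ InBC Δ r (insert s σ)) ↔ InBC (lkC Δ s) (contrRank r s) σ := by
  simp only [InBC, mem_lkC]
  constructor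
  · rintro ⟨hsσ, hσ, hbc⟩
    exact ⟨⟨hsσ, hσ⟩, fun hbc' => hbc (h.hasBrokenCircuit_insert_of_lkC hsΔ hmax hs hbc')⟩
  · rintro ⟨⟨hsσ, hσ⟩, hbc⟩
    exact ⟨hsσ, hσ, fun hbc' => hbc (h.hasBrokenCircuit_lkC_of_insert hsΔ hs hsσ hσ hbc')⟩

end IsSemimatroid

theorem brokenCircuit_del_lk_general {α : Type*} [LinearOrder α]
    (Δ : Finset (Finset α)) (r : Finset α → ℕ)
    (h : IsSemimatroid (· ∈ Δ) r)
    (s : α) (hmax : ∀ a : α, a ≤ s)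
    (hsΔ : ({s} : Finset α) ∈ Δ)
    (hnotloop : r {s} ≠ 0) :
    (∀ σ : Finset α, (InBC Δ r σ ∧ s ∉ σ) ↔ InBC (delC Δ s) r σ) ∧
    (∀ σ : Finset α,
      (s ∉ σ ∧ InBC Δ r (insert s σ)) ↔
        InBC (lkC Δ s) (fun τ => r (insert s τ) - r {s}) σ) :=
  ⟨inBC_delC_iff hmax hnotloop, h.inBC_lkC_iff hsΔ hmax hnotloop⟩

/-- Let `s = max S`, with `{s} ∈ Δ`, `s` neither a loop nor a coloop. Then
`del_s(BC(𝒞)) = BC(𝒞 − s)` and `lk_s(BC(𝒞)) = BC(𝒞/s)`, where the contraction `𝒞/s` has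
face set `lk_s(Δ)` and rank `r'(σ) = r(σ∪{s}) − r({s})`. -/
theorem brokenCircuit_del_lk {α : Type*} [LinearOrder α]
    (Δ : Finset (Finset α)) (r : Finset α → ℕ)
    (h : IsSemimatroid (· ∈ Δ) r)
    (s : α) (hmax : ∀ a : α, a ≤ s)
    (hsΔ : ({s} : Finset α) ∈ Δ)
    (hnotloop : r {s} ≠ 0)
    (hnotcoloop : ∃ B, IsSMBasis Δ r B ∧ s ∉ B) :
    (∀ σ : Finset α, (InBC Δ r σ ∧ s ∉ σ) ↔ InBC (delC Δ s) r σ) ∧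
    (∀ σ : Finset α,
      (s ∉ σ ∧ InBC Δ r (insert s σ)) ↔
        InBC (lkC Δ s) (fun τ => r (insert s τ) - r {s}) σ) :=
  brokenCircuit_del_lk_general Δ r h s hmax hsΔ hnotloop
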